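/- arXiv:2601.07993 — 3 statements merged into one kernel-verified Lean document; each statement's English description precedes it below -/
import Mathlib

section
/- Let B be the ordinal sum of copulas B_1,…,B_n with respect to pairwise disjoint open subintervals (a_1,b_1),…,(a_n,b_n) of [0,1]. Then Spearman's footrule of B satisfies φ(B) = 1 − Σ_{k=1}^n (b_k − a_k)² · (1 − φ(B_k)). -/
open MeasureTheory Set

/-- A bivariate copula, viewed as a real function of two variables whose defining
properties are required on the unit square. -/
def IsCopula (C : ℝ → ℝ → ℝ) : Prop :=
  (∀ v ∈ Icc (0:ℝ) 1, C 0 v = 0) ∧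
  (∀ u ∈ Icc (0:ℝ) 1, C u 0 = 0) ∧
  (∀ u ∈ Icc (0:ℝ) 1, C u 1 = u) ∧
  (∀ v ∈ Icc (0:ℝ) 1, C 1 v = v) ∧
  (∀ u₁ u₂ v₁ v₂ : ℝ, 0 ≤ u₁ → u₁ ≤ u₂ → u₂ ≤ 1 → 0 ≤ v₁ → v₁ ≤ v₂ → v₂ ≤ 1 →
    0 ≤ C u₂ v₂ - C u₂ v₁ - C u₁ v₂ + C u₁ v₁)

/-- Spearman's rho: ρ(C) = 12·∫₀¹∫₀¹ C(u,v) du dv − 3. -/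
noncomputable def spearmanRho (C : ℝ → ℝ → ℝ) : ℝ :=
  12 * (∫ u in (0:ℝ)..1, ∫ v in (0:ℝ)..1, C u v) - 3

/-- Spearman's footrule: φ(C) = 6·∫₀¹ C(u,u) du − 2. -/
noncomputable def footrule (C : ℝ → ℝ → ℝ) : ℝ :=
  6 * (∫ u in (0:ℝ)..1, C u u) - 2

/-- Gini's gamma: γ(C) = 4·∫₀¹ C(u,u) du + 4·∫₀¹ C(u,1−u) du − 2. -/
noncomputable def giniGamma (C : ℝ → ℝ → ℝ) : ℝ :=
  4 * (∫ u in (0:ℝ)..1, C u u) + 4 * (∫ u in (0:ℝ)..1, C u (1 - u)) - 2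

/-- Blomqvist's beta: β(C) = 4·C(1/2,1/2) − 1. -/
noncomputable def blomqvistBeta (C : ℝ → ℝ → ℝ) : ℝ :=
  4 * C (1/2) (1/2) - 1

/-- A copula measure of a copula `C`: a probability measure on the plane with
μ([0,u]×[0,v]) = C(u,v) for u,v in the unit interval. -/
def IsCopulaMeasure (C : ℝ → ℝ → ℝ) (μ : Measure (ℝ × ℝ)) : Prop :=
  IsProbabilityMeasure μ ∧
  ∀ u ∈ Icc (0:ℝ) 1, ∀ v ∈ Icc (0:ℝ) 1,
    μ (Icc 0 u ×ˢ Icc 0 v) = ENNReal.ofReal (C u v)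

/-- Kendall's tau expressed via a copula measure μ of C:
τ(C) = 4·∫_{[0,1]²} C dμ − 1. -/
noncomputable def kendallTauInt (C : ℝ → ℝ → ℝ) (μ : Measure (ℝ × ℝ)) : ℝ :=
  4 * (∫ p in Icc (0:ℝ) 1 ×ˢ Icc (0:ℝ) 1, C p.1 p.2 ∂μ) - 1

/-- `B` is the ordinal sum of the copulas `Bk k` with respect to the pairwise disjoint
open subintervals `(a k, b k)` of `[0,1]`. -/
def IsOrdinalSum {n : ℕ} (a b : Fin n → ℝ) (Bk : Fin n → ℝ → ℝ → ℝ)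
    (B : ℝ → ℝ → ℝ) : Prop :=
  (∀ k, 0 ≤ a k ∧ a k ≤ b k ∧ b k ≤ 1) ∧
  (Pairwise fun i j => Disjoint (Ioo (a i) (b i)) (Ioo (a j) (b j))) ∧
  (∀ k, ∀ u ∈ Icc (a k) (b k), ∀ v ∈ Icc (a k) (b k),
    B u v = a k + (b k - a k) * Bk k ((u - a k) / (b k - a k)) ((v - a k) / (b k - a k))) ∧
  (∀ u ∈ Icc (0:ℝ) 1, ∀ v ∈ Icc (0:ℝ) 1,
    (∀ k, ¬(u ∈ Icc (a k) (b k) ∧ v ∈ Icc (a k) (b k))) → B u v = min u v)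

/-!
On the diagonal, `B u u = u` outside the open intervals `(a k, b k)` (at their endpoints because
`Bk k` is a copula), while on `(a k, b k)` it is the rescaled diagonal of `Bk k`. The substitution
`t = (u - a k) / (b k - a k)` turns `∫ (B u u - u)` over `(a k, b k)` into
`(b k - a k)² (∫ Bk k t t - 1/2)`, and the formula follows from `∫₀¹ u = 1/2`.
-/

lemma IsCopula.monotoneOn_diag {C : ℝ → ℝ → ℝ} (hC : IsCopula C) :
    MonotoneOn (fun t => C t t) (Icc 0 1) := by
  obtain ⟨hzero_left, hzero_right, -, -, hrect⟩ := hC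
  intro s hs t ht hst
  -- `C t t - C s s` is the sum of the masses of `[s,t] × [0,s]` and `[0,t] × [s,t]`.
  have h₁ := hrect s t 0 s hs.1 hst ht.2 le_rfl hs.1 hs.2
  have h₂ := hrect 0 t s t le_rfl ht.1 ht.2 hs.1 hst ht.2
  simp only [hzero_right t ht, hzero_right s hs, hzero_left t ht, hzero_left s hs] at h₁ h₂ ⊢
  linarith

noncomputable def diagExcess (C : ℝ → ℝ → ℝ) (a b u : ℝ) : ℝ :=
  a + (b - a) * C ((u - a) / (b - a)) ((u - a) / (b - a)) - u

lemma diagExcess_eq_zero_of_mem_Icc_of_notMem_Ioo {C : ℝ → ℝ → ℝ} (hC : IsCopula C)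
    {a b u : ℝ} (hu : u ∈ Icc a b) (hu' : u ∉ Ioo a b) : diagExcess C a b u = 0 := by
  unfold diagExcess
  rcases eq_or_lt_of_le hu.1 with rfl | hau
  · rw [sub_self, zero_div, hC.1 0 (left_mem_Icc.2 zero_le_one)]
    ring
  · obtain rfl : u = b := hu.2.eq_or_lt.resolve_right fun hub => hu' ⟨hau, hub⟩
    rw [div_self (sub_ne_zero.2 hau.ne'), hC.2.2.1 1 (right_mem_Icc.2 zero_le_one)]
    ring

lemma IsCopula.monotoneOn_diag_rescale {C : ℝ → ℝ → ℝ} (hC : IsCopula C) {a b : ℝ} (hab : a ≤ b) :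
    MonotoneOn (fun u => C ((u - a) / (b - a)) ((u - a) / (b - a))) (Icc a b) := by
  have hba : 0 ≤ b - a := sub_nonneg.2 hab
  have hmaps : ∀ u ∈ Icc a b, (u - a) / (b - a) ∈ Icc (0 : ℝ) 1 := fun u hu =>
    ⟨div_nonneg (sub_nonneg.2 hu.1) hba, div_le_one_of_le₀ (sub_le_sub_right hu.2 a) hba⟩
  intro x hx y hy hxy
  exact hC.monotoneOn_diag (hmaps x hx) (hmaps y hy) (by gcongr)

lemma integrableOn_diagExcess {C : ℝ → ℝ → ℝ} (hC : IsCopula C) {a b : ℝ} (hab : a ≤ b) :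
    IntegrableOn (diagExcess C a b) (Icc a b) := by
  have hX := hC.monotoneOn_diag_rescale hab |>.integrableOn_isCompact (μ := volume)
    isCompact_Icc
  exact ((integrableOn_const measure_Icc_lt_top.ne).add (hX.const_mul _)).sub
    continuous_id.continuousOn.integrableOn_Icc

lemma integral_diagExcess {C : ℝ → ℝ → ℝ} (hC : IsCopula C) {a b : ℝ} (hab : a ≤ b) :
    ∫ u in a..b, diagExcess C a b u = (b - a) ^ 2 * ((∫ t in (0:ℝ)..1, C t t) - 1 / 2) := by
  rcases eq_or_lt_of_le hab with rfl | hlt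
  · simp
  have hne : b - a ≠ 0 := sub_ne_zero.2 hlt.ne'
  have hX :
      IntervalIntegrable (fun u => C ((u - a) / (b - a)) ((u - a) / (b - a))) volume a b :=
    MonotoneOn.intervalIntegrable (by rw [uIcc_of_le hab]; exact hC.monotoneOn_diag_rescale hab)
  have hsubst : ∫ u in a..b, C ((u - a) / (b - a)) ((u - a) / (b - a))
      = (b - a) * ∫ t in (0:ℝ)..1, C t t := by
    rw [intervalIntegral.integral_comp_sub_right (fun x => C (x / (b - a)) (x / (b - a))),
      sub_self, intervalIntegral.integral_comp_div (fun t => C t t) hne, zero_div, div_self hne,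
      smul_eq_mul]
  unfold diagExcess
  rw [intervalIntegral.integral_sub (intervalIntegrable_const.add (hX.const_mul _))
      intervalIntegral.intervalIntegrable_id,
    intervalIntegral.integral_add intervalIntegrable_const (hX.const_mul _),
    intervalIntegral.integral_const_mul, intervalIntegral.integral_const, integral_id, hsubst,
    smul_eq_mul]
  ring

lemma intervalIntegral_indicator_Ioo {f : ℝ → ℝ} {a b c d : ℝ} (hca : c ≤ a) (hab : a ≤ b)
    (hbd : b ≤ d) : ∫ x in c..d, (Ioo a b).indicator f x = ∫ x in a..b, f x := by
  rw [intervalIntegral.integral_of_le (hca.trans (hab.trans hbd)),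
    intervalIntegral.integral_of_le hab, setIntegral_indicator measurableSet_Ioo,
    inter_eq_right.2 (Ioo_subset_Ioc_self.trans (Ioc_subset_Ioc hca hbd)),
    integral_Ioc_eq_integral_Ioo]

lemma IsOrdinalSum.diag_eq {n : ℕ} {a b : Fin n → ℝ} {Bk : Fin n → ℝ → ℝ → ℝ}
    {B : ℝ → ℝ → ℝ} (hBk : ∀ k, IsCopula (Bk k)) (hB : IsOrdinalSum a b Bk B)
    {u : ℝ} (hu : u ∈ Icc 0 1) :
    B u u = u + ∑ k, (Ioo (a k) (b k)).indicator (diagExcess (Bk k) (a k) (b k)) u := by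
  obtain ⟨-, hdisj, hin, hout⟩ := hB
  by_cases hIoo : ∃ k, u ∈ Ioo (a k) (b k)
  · obtain ⟨k, hk⟩ := hIoo
    have hother : ∀ j ≠ k, u ∉ Ioo (a j) (b j) := fun j hjk huj =>
      disjoint_left.1 (hdisj hjk) huj hk
    rw [Finset.sum_eq_single_of_mem k (Finset.mem_univ k)
        fun j _ hjk => indicator_of_notMem (hother j hjk) _,
      indicator_of_mem hk, hin k u (Ioo_subset_Icc_self hk) u (Ioo_subset_Icc_self hk),
      diagExcess]
    ring
  push Not at hIoo
  rw [Finset.sum_eq_zero fun k _ => indicator_of_notMem (hIoo k) _, add_zero]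
  by_cases hIcc : ∃ k, u ∈ Icc (a k) (b k)
  · obtain ⟨k, hk⟩ := hIcc
    have := diagExcess_eq_zero_of_mem_Icc_of_notMem_Ioo (hBk k) hk (hIoo k)
    rw [diagExcess] at this
    rw [hin k u hk u hk]
    linarith
  · push Not at hIcc
    rw [hout u hu u hu fun k hk => hIcc k hk.1, min_self]

lemma IsOrdinalSum.integral_diag {n : ℕ} {a b : Fin n → ℝ} {Bk : Fin n → ℝ → ℝ → ℝ}
    {B : ℝ → ℝ → ℝ} (hBk : ∀ k, IsCopula (Bk k)) (hB : IsOrdinalSum a b Bk B) :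
    ∫ u in (0:ℝ)..1, B u u
      = 1 / 2 + ∑ k, (b k - a k) ^ 2 * ((∫ t in (0:ℝ)..1, Bk k t t) - 1 / 2) := by
  have hint : ∀ k, IntervalIntegrable
      ((Ioo (a k) (b k)).indicator (diagExcess (Bk k) (a k) (b k))) volume 0 1 := fun k =>
    ((integrableOn_diagExcess (hBk k) (hB.1 k).2.1).mono_set Ioo_subset_Icc_self
      |>.integrable_indicator measurableSet_Ioo).intervalIntegrable
  have hsum : IntervalIntegrable
      (fun u => ∑ k, (Ioo (a k) (b k)).indicator (diagExcess (Bk k) (a k) (b k)) u)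
      volume 0 1 := by
    simpa only [Finset.sum_fn] using IntervalIntegrable.sum Finset.univ fun k _ => hint k
  rw [intervalIntegral.integral_congr fun u hu =>
      hB.diag_eq hBk (by rwa [uIcc_of_le zero_le_one] at hu),
    intervalIntegral.integral_add intervalIntegral.intervalIntegrable_id hsum,
    intervalIntegral.integral_finsetSum fun k _ => hint k, integral_id]
  simp only [intervalIntegral_indicator_Ioo (hB.1 _).1 (hB.1 _).2.1 (hB.1 _).2.2,
    integral_diagExcess (hBk _) (hB.1 _).2.1]
  norm_num

/-- Spearman's footrule of an ordinal sum:
φ(B) = 1 − Σ_k (b_k − a_k)² (1 − φ(B_k)). -/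
theorem footrule_ordinalSum {n : ℕ} (a b : Fin n → ℝ) (Bk : Fin n → ℝ → ℝ → ℝ)
    (B : ℝ → ℝ → ℝ) (hBk : ∀ k, IsCopula (Bk k)) (hB : IsOrdinalSum a b Bk B) :
    footrule B = 1 - ∑ k, (b k - a k) ^ 2 * (1 - footrule (Bk k)) := by
  have hterm : ∀ k, (b k - a k) ^ 2 * (1 - footrule (Bk k))
      = -6 * ((b k - a k) ^ 2 * ((∫ t in (0:ℝ)..1, Bk k t t) - 1 / 2)) := fun k => by
    rw [footrule]
    ring
  rw [footrule, hB.integral_diag hBk, Finset.sum_congr rfl fun k _ => hterm k, ← Finset.mul_sum]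
  ring
end

section
/- Let B be the ordinal sum of copulas B_1,…,B_n with respect to pairwise disjoint open subintervals (a_1,b_1),…,(a_n,b_n) of [0,1]. If 1/2 does not belong to any of the open intervals (a_k, b_k), then Gini's gamma of B satisfies γ(B) = 1 − (2/3)·Σ_{k=1}^n (b_k − a_k)² · (1 − φ(B_k)), where φ denotes Spearman's footrule. -/
/-!
On the antidiagonal, a point `(u, 1 - u)` lies in a block `[a_k, b_k]²` only if `1/2` lies in
`[a_k, b_k]`, hence (as `1/2` is never interior) only for `u = 1/2`, a corner of the block; so
`B(u, 1 - u) = min(u, 1 - u)` and the antidiagonal integral is `1/4`, as for the comonotone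
copula. On the diagonal, `B(u, u) - u` vanishes off the disjoint open intervals `(a_k, b_k)`,
and on `(a_k, b_k)` the affine change of variables `t = (u - a_k)/(b_k - a_k)` turns its integral
into `(b_k - a_k)² (∫₀¹ B_k(t, t) dt - 1/2)`.
-/

open MeasureTheory Set

section

variable {E : Type*} [NormedAddCommGroup E]

theorem IntervalIntegrable.comp_sub_div_sub {f : ℝ → E} {a b : ℝ}
    (hf : IntervalIntegrable f volume 0 1) :
    IntervalIntegrable (fun u => f ((u - a) / (b - a))) volume a b := by
  rcases eq_or_ne b a with rfl | hab
  · exact .refl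
  have := (hf.comp_mul_left (c := (b - a)⁻¹)).comp_sub_right a
  convert this using 2 <;> field_simp <;> ring

theorem IntervalIntegrable.indicator_Ioo {f : ℝ → E} {a b : ℝ}
    (hf : IntervalIntegrable f volume a b) (c d : ℝ) :
    IntervalIntegrable ((Ioo a b).indicator f) volume c d :=
  ((integrable_indicator_iff measurableSet_Ioo).2
    (hf.1.mono_set Ioo_subset_Ioc_self)).intervalIntegrable

variable [NormedSpace ℝ E]

theorem intervalIntegral.integral_comp_sub_div_sub (f : ℝ → E) (a b : ℝ) :
    ∫ u in a..b, f ((u - a) / (b - a)) = (b - a) • ∫ t in (0:ℝ)..1, f t := by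
  rcases eq_or_ne b a with rfl | hab
  · simp
  rw [intervalIntegral.integral_comp_sub_right (fun x => f (x / (b - a))),
    intervalIntegral.integral_comp_div _ (sub_ne_zero.2 hab), sub_self, zero_div,
    div_self (sub_ne_zero.2 hab)]

theorem intervalIntegral.integral_indicator_Ioo {f : ℝ → E} {a b c d : ℝ}
    (hca : c ≤ a) (hab : a ≤ b) (hbd : b ≤ d) :
    ∫ x in c..d, (Ioo a b).indicator f x = ∫ x in a..b, f x := by
  rw [intervalIntegral.integral_of_le (hca.trans (hab.trans hbd)),
    intervalIntegral.integral_of_le hab, setIntegral_indicator measurableSet_Ioo,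
    integral_Ioc_eq_integral_Ioo]
  congr 2
  exact inter_eq_right.2 (Ioo_subset_Ioc_self.trans (Ioc_subset_Ioc hca hbd))

end

theorem integral_min_one_sub : ∫ u in (0:ℝ)..1, min u (1 - u) = 1 / 4 := by
  have hcont : Continuous fun u : ℝ => min u (1 - u) := by fun_prop
  have hleft : ∫ u in (0:ℝ)..1 / 2, min u (1 - u) = ∫ u in (0:ℝ)..1 / 2, u :=
    intervalIntegral.integral_congr fun u hu => by
      rw [uIcc_of_le (by norm_num)] at hu
      exact min_eq_left (by linarith [hu.2])
  have hright : ∫ u in (1 / 2:ℝ)..1, min u (1 - u) = ∫ u in (1 / 2:ℝ)..1, (1 - u) :=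
    intervalIntegral.integral_congr fun u hu => by
      rw [uIcc_of_le (by norm_num)] at hu
      exact min_eq_right (by linarith [hu.1])
  rw [← intervalIntegral.integral_add_adjacent_intervals (b := 1 / 2)
      (hcont.intervalIntegrable _ _) (hcont.intervalIntegrable _ _), hleft, hright,
    intervalIntegral.integral_sub intervalIntegrable_const intervalIntegral.intervalIntegrable_id]
  norm_num

namespace IsCopula

variable {C : ℝ → ℝ → ℝ}

lemma zero_zero (h : IsCopula C) : C 0 0 = 0 :=
  h.1 0 ⟨le_rfl, zero_le_one⟩

lemma one_one (h : IsCopula C) : C 1 1 = 1 :=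
  h.2.2.1 1 ⟨zero_le_one, le_rfl⟩

lemma monotoneOn_diag_s4 (h : IsCopula C) : MonotoneOn (fun t => C t t) (Icc 0 1) := by
  obtain ⟨h0v, hu0, -, -, hrect⟩ := h
  intro x hx y hy hxy
  have h₁ := hrect x y 0 x hx.1 hxy hy.2 le_rfl hx.1 hx.2
  have h₂ := hrect 0 y x y le_rfl hy.1 hy.2 hx.1 hxy hy.2
  linarith [hu0 y hy, hu0 x hx, h0v y hy, h0v x hx]

lemma intervalIntegrable_diag (h : IsCopula C) :
    IntervalIntegrable (fun t => C t t) volume 0 1 := by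
  apply MonotoneOn.intervalIntegrable
  rw [uIcc_of_le zero_le_one]
  exact h.monotoneOn_diag_s4

end IsCopula

namespace IsOrdinalSum

variable {n : ℕ} {a b : Fin n → ℝ} {Bk : Fin n → ℝ → ℝ → ℝ} {B : ℝ → ℝ → ℝ}

lemma diag_eq_s4 (hB : IsOrdinalSum a b Bk B) (k : Fin n) {u : ℝ} (hu : u ∈ Icc (a k) (b k)) :
    B u u = a k + (b k - a k) * Bk k ((u - a k) / (b k - a k)) ((u - a k) / (b k - a k)) :=
  hB.2.2.1 k u hu u hu

lemma diag_left_endpoint (hB : IsOrdinalSum a b Bk B) {k : Fin n} (hBk : IsCopula (Bk k)) :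
    B (a k) (a k) = a k := by
  rw [hB.diag_eq_s4 k ⟨le_rfl, (hB.1 k).2.1⟩, sub_self, zero_div, hBk.zero_zero, mul_zero,
    add_zero]

lemma diag_right_endpoint (hB : IsOrdinalSum a b Bk B) {k : Fin n} (hBk : IsCopula (Bk k)) :
    B (b k) (b k) = b k := by
  rw [hB.diag_eq_s4 k ⟨(hB.1 k).2.1, le_rfl⟩]
  rcases eq_or_ne (b k - a k) 0 with hL | hL
  · rw [hL, zero_mul, add_zero]
    linarith
  · rw [div_self hL, hBk.one_one]
    ring

lemma diag_eq_self_of_forall_notMem (hB : IsOrdinalSum a b Bk B) (hBk : ∀ k, IsCopula (Bk k))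
    {u : ℝ} (hu : u ∈ Icc 0 1) (hnot : ∀ k, u ∉ Ioo (a k) (b k)) : B u u = u := by
  by_cases hblock : ∃ k, u ∈ Icc (a k) (b k)
  · obtain ⟨k, hk⟩ := hblock
    rcases eq_endpoints_or_mem_Ioo_of_mem_Icc hk with rfl | rfl | hk'
    · exact hB.diag_left_endpoint (hBk k)
    · exact hB.diag_right_endpoint (hBk k)
    · exact absurd hk' (hnot k)
  · push Not at hblock
    rw [hB.2.2.2 u hu u hu fun k hk => hblock k hk.1, min_self]

lemma antidiag_eq_min (hB : IsOrdinalSum a b Bk B) (hBk : ∀ k, IsCopula (Bk k))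
    (hhalf : ∀ k, (1:ℝ) / 2 ∉ Ioo (a k) (b k)) {u : ℝ} (hu : u ∈ Icc 0 1) :
    B u (1 - u) = min u (1 - u) := by
  by_cases hblock : ∃ k, u ∈ Icc (a k) (b k) ∧ 1 - u ∈ Icc (a k) (b k)
  · obtain ⟨k, ⟨hau, hub⟩, ⟨hau', hub'⟩⟩ := hblock
    have hu_half : u = 1 / 2 := by
      rcases not_and_or.1 (hhalf k) with h | h <;> rw [not_lt] at h <;> linarith
    subst hu_half
    rw [show (1:ℝ) - 1 / 2 = 1 / 2 by norm_num, min_self]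
    exact hB.diag_eq_self_of_forall_notMem hBk ⟨by norm_num, by norm_num⟩ hhalf
  · push Not at hblock
    exact hB.2.2.2 u hu (1 - u) ⟨by linarith [hu.2], by linarith [hu.1]⟩
      fun k hk => hblock k hk.1 hk.2

lemma diag_eq_add_sum_indicator (hB : IsOrdinalSum a b Bk B) (hBk : ∀ k, IsCopula (Bk k))
    {u : ℝ} (hu : u ∈ Icc 0 1) :
    B u u = u + ∑ k, (Ioo (a k) (b k)).indicator (fun t => B t t - t) u := by
  by_cases hblock : ∃ k, u ∈ Ioo (a k) (b k)
  · obtain ⟨k, hk⟩ := hblock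
    rw [Finset.sum_eq_single k (fun j _ hjk => indicator_of_notMem
        (disjoint_left.1 (hB.2.1 hjk.symm) hk) _) (by simp), indicator_of_mem hk]
    ring
  · push Not at hblock
    simp only [indicator_of_notMem (hblock _), Finset.sum_const_zero, add_zero]
    exact hB.diag_eq_self_of_forall_notMem hBk hu hblock

lemma eqOn_diag_sub (hB : IsOrdinalSum a b Bk B) (k : Fin n) :
    EqOn
      (fun u => a k + (b k - a k) * Bk k ((u - a k) / (b k - a k)) ((u - a k) / (b k - a k)) - u)
      (fun u => B u u - u) (uIcc (a k) (b k)) := fun u hu => by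
  rw [uIcc_of_le (hB.1 k).2.1] at hu
  simp only [hB.diag_eq_s4 k hu]

lemma intervalIntegrable_diag_sub (hB : IsOrdinalSum a b Bk B) {k : Fin n}
    (hBk : IsCopula (Bk k)) : IntervalIntegrable (fun u => B u u - u) volume (a k) (b k) :=
  (intervalIntegrable_congr ((hB.eqOn_diag_sub k).mono uIoc_subset_uIcc)).1 <|
    (intervalIntegrable_const.add (hBk.intervalIntegrable_diag.comp_sub_div_sub.const_mul _)).sub
      intervalIntegral.intervalIntegrable_id

lemma integral_diag_sub (hB : IsOrdinalSum a b Bk B) {k : Fin n} (hBk : IsCopula (Bk k)) :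
    ∫ u in a k..b k, (B u u - u) = (b k - a k) ^ 2 * ((∫ t in (0:ℝ)..1, Bk k t t) - 1 / 2) := by
  have hdiag := hBk.intervalIntegrable_diag.comp_sub_div_sub (a := a k) (b := b k)
  rw [← intervalIntegral.integral_congr (hB.eqOn_diag_sub k),
    intervalIntegral.integral_sub (intervalIntegrable_const.add (hdiag.const_mul _))
      intervalIntegral.intervalIntegrable_id,
    intervalIntegral.integral_add intervalIntegrable_const (hdiag.const_mul _),
    intervalIntegral.integral_const_mul,
    intervalIntegral.integral_comp_sub_div_sub (fun t => Bk k t t),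
    intervalIntegral.integral_const, integral_id, smul_eq_mul]
  ring

lemma integral_diag_s4 (hB : IsOrdinalSum a b Bk B) (hBk : ∀ k, IsCopula (Bk k)) :
    ∫ u in (0:ℝ)..1, B u u =
      1 / 2 + ∑ k, (b k - a k) ^ 2 * ((∫ t in (0:ℝ)..1, Bk k t t) - 1 / 2) := by
  have hind : ∀ k,
      IntervalIntegrable ((Ioo (a k) (b k)).indicator fun t => B t t - t) volume 0 1 :=
    fun k => (hB.intervalIntegrable_diag_sub (hBk k)).indicator_Ioo 0 1
  have hsum : IntervalIntegrable
      (fun u => ∑ k, (Ioo (a k) (b k)).indicator (fun t => B t t - t) u) volume 0 1 := by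
    simpa only [Finset.sum_fn] using IntervalIntegrable.sum Finset.univ fun k _ => hind k
  rw [intervalIntegral.integral_congr fun u hu =>
      hB.diag_eq_add_sum_indicator hBk (by rwa [uIcc_of_le zero_le_one] at hu),
    intervalIntegral.integral_add intervalIntegral.intervalIntegrable_id hsum,
    intervalIntegral.integral_finsetSum fun k _ => hind k, integral_id]
  congr 1
  · norm_num
  refine Finset.sum_congr rfl fun k _ => ?_
  rw [intervalIntegral.integral_indicator_Ioo (hB.1 k).1 (hB.1 k).2.1 (hB.1 k).2.2,
    hB.integral_diag_sub (hBk k)]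

lemma integral_antidiag (hB : IsOrdinalSum a b Bk B) (hBk : ∀ k, IsCopula (Bk k))
    (hhalf : ∀ k, (1:ℝ) / 2 ∉ Ioo (a k) (b k)) : ∫ u in (0:ℝ)..1, B u (1 - u) = 1 / 4 := by
  rw [intervalIntegral.integral_congr fun u hu =>
      hB.antidiag_eq_min hBk hhalf (by rwa [uIcc_of_le zero_le_one] at hu), integral_min_one_sub]

end IsOrdinalSum

/-- Gini's gamma of an ordinal sum when 1/2 belongs to no interval (a_k, b_k):
γ(B) = 1 − (2/3) Σ_k (b_k − a_k)² (1 − φ(B_k)). -/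
theorem giniGamma_ordinalSum_of_half_notMem {n : ℕ} (a b : Fin n → ℝ)
    (Bk : Fin n → ℝ → ℝ → ℝ) (B : ℝ → ℝ → ℝ)
    (hBk : ∀ k, IsCopula (Bk k)) (hB : IsOrdinalSum a b Bk B)
    (hhalf : ∀ k, (1:ℝ)/2 ∉ Ioo (a k) (b k)) :
    giniGamma B = 1 - (2/3) * ∑ k, (b k - a k) ^ 2 * (1 - footrule (Bk k)) := by
  have hfootrule : ∑ k, (b k - a k) ^ 2 * (1 - footrule (Bk k)) =
      -6 * ∑ k, (b k - a k) ^ 2 * ((∫ t in (0:ℝ)..1, Bk k t t) - 1 / 2) := by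
    rw [Finset.mul_sum]
    exact Finset.sum_congr rfl fun k _ => by rw [footrule]; ring
  rw [giniGamma, hB.integral_diag_s4 hBk, hB.integral_antidiag hBk hhalf, hfootrule]
  ring
end

section
/- For any copula C with copula measure μ, Kendall's tau τ(C) = 4·∫_{[0,1]²} C dμ − 1, Spearman's footrule φ(C), and Gini's gamma γ(C) satisfy max{ (4/3)·φ(C) − 1/3, −(2/3)·φ(C) + γ(C) − 1/3 } ≤ τ(C) ≤ min{ (2/3)·φ(C) + 1/3, −(4/3)·φ(C) + 2·γ(C) + 1/3 }. -/
open MeasureTheory Set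

/-!
Write `ν` for the copula measure restricted to the unit square, `A = ∫₀¹ C(t,t) dt` and
`B = ∫₀¹ C(t,1-t) dt`. The four bounds say `2A - 1/2 ≤ ∫ C dν ≤ A` and `B ≤ ∫ C dν ≤ 2B`, and each
is a pointwise inequality for the copula integrated against `ν`:
`C(u,v) ≤ min(u,v)`, `C(u,u) + C(v,v) - |u - v| ≤ 2 C(u,v)`, `(u+v-1)⁺ ≤ C(u,v)` and
`C(u,v) ≤ C(u,1-u) + (u+v-1)⁺`. The other sides integrate to expressions in `A` and `B` because
both marginals of `ν` are uniform and, by Tonelli,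
`∫ λ{t ∈ [0,1] : a t < u, b t < v} dν(u,v) = ∫₀¹ ν((a t, ∞) × (b t, ∞)) dt
  = ∫₀¹ (1 - a t - b t + C(a t, b t)) dt`;
`a = b = id` gives `∫ min(u,v) dν = A`, and `a = id`, `b = 1 - id` gives `∫ (u+v-1)⁺ dν = B`.
-/

local notation "𝕀²" => (SProd.sprod (Icc (0:ℝ) 1) (Icc (0:ℝ) 1) : Set (ℝ × ℝ))

namespace IsCopula

variable {C : ℝ → ℝ → ℝ}

lemma mono_left (hC : IsCopula C) {u₁ u₂ v : ℝ} (h₀ : 0 ≤ u₁) (h : u₁ ≤ u₂) (h₁ : u₂ ≤ 1)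
    (hv : v ∈ Icc (0:ℝ) 1) : C u₁ v ≤ C u₂ v := by
  have := hC.2.2.2.2 u₁ u₂ 0 v h₀ h h₁ le_rfl hv.1 hv.2
  linarith [hC.2.1 u₁ ⟨h₀, h.trans h₁⟩, hC.2.1 u₂ ⟨h₀.trans h, h₁⟩]

lemma mono_right (hC : IsCopula C) {u v₁ v₂ : ℝ} (hu : u ∈ Icc (0:ℝ) 1) (h₀ : 0 ≤ v₁)
    (h : v₁ ≤ v₂) (h₁ : v₂ ≤ 1) : C u v₁ ≤ C u v₂ := by
  have := hC.2.2.2.2 0 u v₁ v₂ le_rfl hu.1 hu.2 h₀ h h₁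
  linarith [hC.1 v₁ ⟨h₀, h.trans h₁⟩, hC.1 v₂ ⟨h₀.trans h, h₁⟩]

lemma sub_le_left (hC : IsCopula C) {u₁ u₂ v : ℝ} (h₀ : 0 ≤ u₁) (h : u₁ ≤ u₂) (h₁ : u₂ ≤ 1)
    (hv : v ∈ Icc (0:ℝ) 1) : C u₂ v - C u₁ v ≤ u₂ - u₁ := by
  have := hC.2.2.2.2 u₁ u₂ v 1 h₀ h h₁ hv.1 hv.2 le_rfl
  linarith [hC.2.2.1 u₁ ⟨h₀, h.trans h₁⟩, hC.2.2.1 u₂ ⟨h₀.trans h, h₁⟩]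

lemma sub_le_right (hC : IsCopula C) {u v₁ v₂ : ℝ} (hu : u ∈ Icc (0:ℝ) 1) (h₀ : 0 ≤ v₁)
    (h : v₁ ≤ v₂) (h₁ : v₂ ≤ 1) : C u v₂ - C u v₁ ≤ v₂ - v₁ := by
  have := hC.2.2.2.2 u 1 v₁ v₂ hu.1 hu.2 le_rfl h₀ h h₁
  linarith [hC.2.2.2.1 v₁ ⟨h₀, h.trans h₁⟩, hC.2.2.2.1 v₂ ⟨h₀.trans h, h₁⟩]

lemma nonneg (hC : IsCopula C) {u v : ℝ} (hu : u ∈ Icc (0:ℝ) 1) (hv : v ∈ Icc (0:ℝ) 1) :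
    0 ≤ C u v := by
  linarith [hC.mono_left le_rfl hu.1 hu.2 hv, hC.1 v hv]

lemma le_min (hC : IsCopula C) {u v : ℝ} (hu : u ∈ Icc (0:ℝ) 1) (hv : v ∈ Icc (0:ℝ) 1) :
    C u v ≤ min u v :=
  _root_.le_min (by linarith [hC.sub_le_left le_rfl hu.1 hu.2 hv, hC.1 v hv])
    (by linarith [hC.sub_le_right hu le_rfl hv.1 hv.2, hC.2.1 u hu])

lemma add_sub_one_le (hC : IsCopula C) {u v : ℝ} (hu : u ∈ Icc (0:ℝ) 1)
    (hv : v ∈ Icc (0:ℝ) 1) : u + v - 1 ≤ C u v := by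
  linarith [hC.sub_le_left hu.1 hu.2 le_rfl hv, hC.2.2.2.1 v hv]

lemma abs_sub_le_left (hC : IsCopula C) {u u' v : ℝ} (hu : u ∈ Icc (0:ℝ) 1)
    (hu' : u' ∈ Icc (0:ℝ) 1) (hv : v ∈ Icc (0:ℝ) 1) : |C u v - C u' v| ≤ |u - u'| := by
  rcases le_total u u' with h | h
  · rw [abs_sub_comm, abs_of_nonneg (sub_nonneg.2 (hC.mono_left hu.1 h hu'.2 hv)),
      abs_sub_comm, abs_of_nonneg (sub_nonneg.2 h)]
    exact hC.sub_le_left hu.1 h hu'.2 hv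
  · rw [abs_of_nonneg (sub_nonneg.2 (hC.mono_left hu'.1 h hu.2 hv)),
      abs_of_nonneg (sub_nonneg.2 h)]
    exact hC.sub_le_left hu'.1 h hu.2 hv

lemma abs_sub_le_right (hC : IsCopula C) {u v v' : ℝ} (hu : u ∈ Icc (0:ℝ) 1)
    (hv : v ∈ Icc (0:ℝ) 1) (hv' : v' ∈ Icc (0:ℝ) 1) : |C u v - C u v'| ≤ |v - v'| := by
  rcases le_total v v' with h | h
  · rw [abs_sub_comm, abs_of_nonneg (sub_nonneg.2 (hC.mono_right hu hv.1 h hv'.2)),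
      abs_sub_comm, abs_of_nonneg (sub_nonneg.2 h)]
    exact hC.sub_le_right hu hv.1 h hv'.2
  · rw [abs_of_nonneg (sub_nonneg.2 (hC.mono_right hu hv'.1 h hv.2)),
      abs_of_nonneg (sub_nonneg.2 h)]
    exact hC.sub_le_right hu hv'.1 h hv.2

lemma lipschitzOnWith (hC : IsCopula C) :
    LipschitzOnWith 2 (fun p : ℝ × ℝ => C p.1 p.2) 𝕀² := by
  refine LipschitzOnWith.of_dist_le_mul fun p hp q hq => ?_
  have h₁ := hC.abs_sub_le_left hp.1 hq.1 hp.2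
  have h₂ := hC.abs_sub_le_right hq.1 hp.2 hq.2
  have d₁ : |p.1 - q.1| ≤ dist p q := by
    rw [Prod.dist_eq, ← Real.dist_eq]; exact le_max_left _ _
  have d₂ : |p.2 - q.2| ≤ dist p q := by
    rw [Prod.dist_eq, ← Real.dist_eq]; exact le_max_right _ _
  rw [Real.dist_eq, NNReal.coe_ofNat]
  linarith [abs_sub_le (C p.1 p.2) (C q.1 p.2) (C q.1 q.2)]

lemma continuousOn (hC : IsCopula C) :
    ContinuousOn (fun p : ℝ × ℝ => C p.1 p.2) 𝕀² :=
  hC.lipschitzOnWith.continuousOn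

lemma continuousOn_diag (hC : IsCopula C) : ContinuousOn (fun t => C t t) (Icc (0:ℝ) 1) :=
  hC.continuousOn.comp (continuous_id.prodMk continuous_id).continuousOn fun _ ht => ⟨ht, ht⟩

lemma continuousOn_antidiag (hC : IsCopula C) :
    ContinuousOn (fun t => C t (1 - t)) (Icc (0:ℝ) 1) :=
  hC.continuousOn.comp (continuous_id.prodMk (continuous_const.sub continuous_id)).continuousOn
    fun _ ht => ⟨ht, by simpa using ht.2, by simpa using ht.1⟩

lemma diag_add_diag_sub_abs_le (hC : IsCopula C) {u v : ℝ} (hu : u ∈ Icc (0:ℝ) 1)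
    (hv : v ∈ Icc (0:ℝ) 1) : C u u + C v v - |u - v| ≤ 2 * C u v := by
  rcases le_total u v with h | h
  · rw [abs_of_nonpos (sub_nonpos.2 h)]
    linarith [hC.mono_right hu hu.1 h hv.2, hC.sub_le_left hu.1 h hv.2 hv]
  · rw [abs_of_nonneg (sub_nonneg.2 h)]
    linarith [hC.mono_left hv.1 h hu.2 hv, hC.sub_le_right hu hv.1 h hu.2]

lemma le_antidiag_add_max (hC : IsCopula C) {u v : ℝ} (hu : u ∈ Icc (0:ℝ) 1)
    (hv : v ∈ Icc (0:ℝ) 1) : C u v ≤ C u (1 - u) + max (u + v - 1) 0 := by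
  rcases le_total v (1 - u) with h | h
  · linarith [hC.mono_right hu hv.1 h (by linarith [hu.1]), le_max_right (u + v - 1) 0]
  · linarith [hC.sub_le_right hu (by linarith [hu.2]) h hv.2, le_max_left (u + v - 1) 0]

end IsCopula

lemma Iic_inter_Icc_zero_one {s : ℝ} (hs : s ≤ 1) : Iic s ∩ Icc 0 1 = Icc 0 s := by
  ext x
  simp only [mem_inter_iff, mem_Iic, mem_Icc]
  exact ⟨fun h => ⟨h.2.1, h.1⟩, fun h => ⟨h.2, h.1, h.2.trans hs⟩⟩

lemma volume_restrict_Icc_Iic {a : ℝ} (ha : a ∈ Icc (0:ℝ) 1) :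
    volume.restrict (Icc (0:ℝ) 1) (Iic a) = ENNReal.ofReal a := by
  rw [Measure.restrict_apply measurableSet_Iic, Iic_inter_Icc_zero_one ha.2, Real.volume_Icc,
    sub_zero]

lemma measure_Iic_eq_ofReal_max_min {ρ : Measure ℝ} [IsProbabilityMeasure ρ]
    (h : ∀ a ∈ Icc (0:ℝ) 1, ρ (Iic a) = ENNReal.ofReal a) (a : ℝ) :
    ρ (Iic a) = ENNReal.ofReal (max 0 (min a 1)) := by
  rcases lt_or_ge a 0 with ha₀ | ha₀
  · have : ρ (Iic a) ≤ ρ (Iic 0) := measure_mono (Iic_subset_Iic.2 ha₀.le)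
    rw [h 0 ⟨le_rfl, zero_le_one⟩, ENNReal.ofReal_zero] at this
    rw [nonpos_iff_eq_zero.1 this, max_eq_left (min_le_of_left_le ha₀.le), ENNReal.ofReal_zero]
  rcases le_or_gt a 1 with ha₁ | ha₁
  · rw [h a ⟨ha₀, ha₁⟩, min_eq_left ha₁, max_eq_right ha₀]
  · have : ρ (Iic 1) ≤ ρ (Iic a) := measure_mono (Iic_subset_Iic.2 ha₁.le)
    rw [h 1 ⟨zero_le_one, le_rfl⟩, ENNReal.ofReal_one] at this
    rw [le_antisymm prob_le_one this, min_eq_right ha₁.le, max_eq_right zero_le_one,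
      ENNReal.ofReal_one]

lemma eq_volume_restrict_Icc_of_measure_Iic {ρ : Measure ℝ} [IsProbabilityMeasure ρ]
    (h : ∀ a ∈ Icc (0:ℝ) 1, ρ (Iic a) = ENNReal.ofReal a) :
    ρ = volume.restrict (Icc (0:ℝ) 1) := by
  have : IsProbabilityMeasure (volume.restrict (Icc (0:ℝ) 1)) := ⟨by simp⟩
  refine Measure.ext_of_Iic _ _ fun a => ?_
  rw [measure_Iic_eq_ofReal_max_min h,
    measure_Iic_eq_ofReal_max_min (fun _ ha => volume_restrict_Icc_Iic ha)]

lemma integral_comp_eq_intervalIntegral_of_measure_Iic {X : Type*} [MeasurableSpace X]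
    {ν : Measure X} [IsProbabilityMeasure ν] {f : X → ℝ} (hf : Measurable f)
    (h : ∀ a ∈ Icc (0:ℝ) 1, ν (f ⁻¹' Iic a) = ENNReal.ofReal a) {g : ℝ → ℝ}
    (hg : ContinuousOn g (Icc (0:ℝ) 1)) :
    ∫ x, g (f x) ∂ν = ∫ t in (0:ℝ)..1, g t := by
  have := Measure.isProbabilityMeasure_map (μ := ν) hf.aemeasurable
  have hmap : ν.map f = volume.restrict (Icc (0:ℝ) 1) :=
    eq_volume_restrict_Icc_of_measure_Iic fun a ha => by
      rw [Measure.map_apply hf measurableSet_Iic, h a ha]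
  rw [← integral_map hf.aemeasurable (hmap ▸ hg.aestronglyMeasurable measurableSet_Icc), hmap,
    integral_Icc_eq_integral_Ioc, intervalIntegral.integral_of_le zero_le_one]

lemma integral_measureReal_prodMk_left_eq {α β : Type*} [MeasurableSpace α] [MeasurableSpace β]
    (ν : Measure α) (ρ : Measure β) [IsFiniteMeasure ν] [IsFiniteMeasure ρ] {S : Set (α × β)}
    (hS : MeasurableSet S) :
    ∫ a, ρ.real (Prod.mk a ⁻¹' S) ∂ν = ∫ b, ν.real ((fun a => (a, b)) ⁻¹' S) ∂ρ := by
  simp only [measureReal_def]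
  rw [integral_toReal (measurable_measure_prodMk_left hS).aemeasurable
      (ae_of_all _ fun _ => measure_lt_top _ _),
    integral_toReal (measurable_measure_prodMk_right hS).aemeasurable
      (ae_of_all _ fun _ => measure_lt_top _ _),
    ← Measure.prod_apply hS, ← Measure.prod_apply_symm hS]

namespace IsCopulaMeasure

variable {C : ℝ → ℝ → ℝ} {μ : Measure (ℝ × ℝ)}

lemma restrict_Iic_prod_Iic (hμ : IsCopulaMeasure C μ) {s t : ℝ} (hs : s ∈ Icc (0:ℝ) 1)
    (ht : t ∈ Icc (0:ℝ) 1) : μ.restrict 𝕀² (Iic s ×ˢ Iic t) = ENNReal.ofReal (C s t) := by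
  rw [Measure.restrict_apply (measurableSet_Iic.prod measurableSet_Iic), prod_inter_prod,
    Iic_inter_Icc_zero_one hs.2, Iic_inter_Icc_zero_one ht.2, hμ.2 s hs t ht]

lemma restrict_Iic_prod_univ (hC : IsCopula C) (hμ : IsCopulaMeasure C μ) {s : ℝ}
    (hs : s ∈ Icc (0:ℝ) 1) : μ.restrict 𝕀² (Iic s ×ˢ univ) = ENNReal.ofReal s := by
  rw [Measure.restrict_apply (measurableSet_Iic.prod MeasurableSet.univ), prod_inter_prod,
    univ_inter, Iic_inter_Icc_zero_one hs.2, hμ.2 s hs 1 ⟨zero_le_one, le_rfl⟩, hC.2.2.1 s hs]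

lemma restrict_univ_prod_Iic (hC : IsCopula C) (hμ : IsCopulaMeasure C μ) {t : ℝ}
    (ht : t ∈ Icc (0:ℝ) 1) : μ.restrict 𝕀² (univ ×ˢ Iic t) = ENNReal.ofReal t := by
  rw [Measure.restrict_apply (MeasurableSet.univ.prod measurableSet_Iic), prod_inter_prod,
    univ_inter, Iic_inter_Icc_zero_one ht.2, hμ.2 1 ⟨zero_le_one, le_rfl⟩ t ht, hC.2.2.2.1 t ht]

lemma isProbabilityMeasure_restrict (hC : IsCopula C) (hμ : IsCopulaMeasure C μ) :
    IsProbabilityMeasure (μ.restrict 𝕀²) :=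
  ⟨by rw [Measure.restrict_apply_univ, hμ.2 1 ⟨zero_le_one, le_rfl⟩ 1 ⟨zero_le_one, le_rfl⟩,
    hC.2.2.1 1 ⟨zero_le_one, le_rfl⟩, ENNReal.ofReal_one]⟩

lemma setIntegral_comp_fst (hC : IsCopula C) (hμ : IsCopulaMeasure C μ) {g : ℝ → ℝ}
    (hg : ContinuousOn g (Icc (0:ℝ) 1)) : ∫ p in 𝕀², g p.1 ∂μ = ∫ t in (0:ℝ)..1, g t :=
  have := hμ.isProbabilityMeasure_restrict hC
  integral_comp_eq_intervalIntegral_of_measure_Iic measurable_fst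
    (fun _ ha => by rw [← prod_univ, hμ.restrict_Iic_prod_univ hC ha]) hg

lemma setIntegral_comp_snd (hC : IsCopula C) (hμ : IsCopulaMeasure C μ) {g : ℝ → ℝ}
    (hg : ContinuousOn g (Icc (0:ℝ) 1)) : ∫ p in 𝕀², g p.2 ∂μ = ∫ t in (0:ℝ)..1, g t :=
  have := hμ.isProbabilityMeasure_restrict hC
  integral_comp_eq_intervalIntegral_of_measure_Iic measurable_snd
    (fun _ ha => by rw [← univ_prod, hμ.restrict_univ_prod_Iic hC ha]) hg

lemma measureReal_restrict_Ioi_prod_Ioi (hC : IsCopula C) (hμ : IsCopulaMeasure C μ) {s t : ℝ}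
    (hs : s ∈ Icc (0:ℝ) 1) (ht : t ∈ Icc (0:ℝ) 1) :
    (μ.restrict 𝕀²).real (Ioi s ×ˢ Ioi t) = 1 - s - t + C s t := by
  have := hμ.isProbabilityMeasure_restrict hC
  have hunion := measureReal_union_add_inter (μ := μ.restrict 𝕀²) (s := Iic s ×ˢ univ)
    (MeasurableSet.univ.prod (measurableSet_Iic (a := t)))
  rw [prod_inter_prod, inter_univ, univ_inter, ← compl_Ioi, ← compl_Ioi, ← compl_prod_eq_union,
    probReal_compl_eq_one_sub (measurableSet_Ioi.prod measurableSet_Ioi)] at hunion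
  simp only [measureReal_def, compl_Ioi, hμ.restrict_Iic_prod_univ hC hs,
    hμ.restrict_univ_prod_Iic hC ht, hμ.restrict_Iic_prod_Iic hs ht,
    ENNReal.toReal_ofReal hs.1, ENNReal.toReal_ofReal ht.1,
    ENNReal.toReal_ofReal (hC.nonneg hs ht)] at hunion ⊢
  linarith

lemma setIntegral_volume_sections (hC : IsCopula C) (hμ : IsCopulaMeasure C μ) {a b : ℝ → ℝ}
    (ha : Measurable a) (hb : Measurable b) (ha₀₁ : MapsTo a (Icc 0 1) (Icc 0 1))
    (hb₀₁ : MapsTo b (Icc 0 1) (Icc 0 1)) :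
    ∫ p in 𝕀², (volume.restrict (Icc (0:ℝ) 1)).real {t | a t < p.1 ∧ b t < p.2} ∂μ =
      ∫ t in (0:ℝ)..1, (1 - a t - b t + C (a t) (b t)) := by
  have := hμ.isProbabilityMeasure_restrict hC
  have hS : MeasurableSet {q : (ℝ × ℝ) × ℝ | a q.2 < q.1.1 ∧ b q.2 < q.1.2} :=
    (measurableSet_lt (ha.comp measurable_snd) (measurable_fst.comp measurable_fst)).inter
      (measurableSet_lt (hb.comp measurable_snd) (measurable_snd.comp measurable_fst))
  refine (integral_measureReal_prodMk_left_eq _ _ hS).trans ?_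
  rw [intervalIntegral.integral_of_le zero_le_one, ← integral_Icc_eq_integral_Ioc]
  exact setIntegral_congr_fun measurableSet_Icc fun t ht =>
    hμ.measureReal_restrict_Ioi_prod_Ioi hC (ha₀₁ ht) (hb₀₁ ht)

lemma setIntegral_min (hC : IsCopula C) (hμ : IsCopulaMeasure C μ) :
    ∫ p in 𝕀², min p.1 p.2 ∂μ = ∫ t in (0:ℝ)..1, C t t := by
  have h := hμ.setIntegral_volume_sections hC (a := fun t => t) (b := fun t => t) measurable_id
    measurable_id (mapsTo_id _) (mapsTo_id _)
  have hlin : ∫ t in (0:ℝ)..1, (1 - t - t) = 0 := by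
    rw [intervalIntegral.integral_sub, intervalIntegral.integral_sub] <;>
      first | exact (by fun_prop : Continuous _).intervalIntegrable _ _ | norm_num [integral_id]
  rw [intervalIntegral.integral_add ((by fun_prop : Continuous _).intervalIntegrable _ _)
    (hC.continuousOn_diag.intervalIntegrable_of_Icc zero_le_one), hlin, zero_add] at h
  rw [← h]
  refine setIntegral_congr_fun (measurableSet_Icc.prod measurableSet_Icc) fun p hp => ?_
  have hm : min p.1 p.2 ∈ Icc (0:ℝ) 1 := ⟨le_min hp.1.1 hp.2.1, (min_le_left _ _).trans hp.1.2⟩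
  rw [show {t : ℝ | t < p.1 ∧ t < p.2} = Iio (min p.1 p.2) from Iio_inter_Iio,
    measureReal_congr Iio_ae_eq_Iic, measureReal_def, volume_restrict_Icc_Iic hm,
    ENNReal.toReal_ofReal hm.1]

lemma setIntegral_max_add_sub_one (hC : IsCopula C) (hμ : IsCopulaMeasure C μ) :
    ∫ p in 𝕀², max (p.1 + p.2 - 1) 0 ∂μ = ∫ t in (0:ℝ)..1, C t (1 - t) := by
  have h := hμ.setIntegral_volume_sections hC (a := fun t => t) (b := fun t => 1 - t)
    measurable_id (measurable_const.sub measurable_id) (mapsTo_id _)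
    fun t ht => ⟨by simpa using ht.2, by simpa using ht.1⟩
  rw [intervalIntegral.integral_congr (g := fun t => C t (1 - t)) fun t _ => by
    simp only; ring] at h
  rw [← h]
  refine setIntegral_congr_fun (measurableSet_Icc.prod measurableSet_Icc) fun p hp => ?_
  have hsec : {t : ℝ | t < p.1 ∧ 1 - t < p.2} = Ioo (1 - p.2) p.1 := by
    ext t
    simp only [mem_ofPred_eq, mem_Ioo]
    constructor <;> rintro ⟨h₁, h₂⟩ <;> constructor <;> linarith
  have hsub : Ioo (1 - p.2) p.1 ⊆ Icc 0 1 :=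
    Ioo_subset_Icc_self.trans (Icc_subset_Icc (by linarith [hp.2.2]) hp.1.2)
  rw [hsec, measureReal_restrict_apply measurableSet_Ioo, inter_eq_self_of_subset_left hsub,
    Real.volume_real_Ioo, sub_sub_eq_add_sub]

lemma integrableOn_square (hμ : IsCopulaMeasure C μ) {f : ℝ × ℝ → ℝ} (hf : ContinuousOn f 𝕀²) :
    IntegrableOn f 𝕀² μ :=
  have := hμ.1
  hf.integrableOn_compact (isCompact_Icc.prod isCompact_Icc)

lemma setIntegral_le_integral_diag (hC : IsCopula C) (hμ : IsCopulaMeasure C μ) :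
    ∫ p in 𝕀², C p.1 p.2 ∂μ ≤ ∫ t in (0:ℝ)..1, C t t :=
  hμ.setIntegral_min hC ▸ setIntegral_mono_on (hμ.integrableOn_square hC.continuousOn)
    (hμ.integrableOn_square (by fun_prop)) (measurableSet_Icc.prod measurableSet_Icc)
    fun _ hp => hC.le_min hp.1 hp.2

lemma setIntegral_abs_sub (hC : IsCopula C) (hμ : IsCopulaMeasure C μ) :
    ∫ p in 𝕀², |p.1 - p.2| ∂μ = 1 - 2 * ∫ t in (0:ℝ)..1, C t t := by
  have habs : ∀ x y : ℝ, |x - y| = x + y - 2 * min x y := fun x y => by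
    linarith [max_sub_min_eq_abs x y, min_add_max x y, abs_sub_comm x y]
  have hfst : ∫ p in 𝕀², p.1 ∂μ = 1 / 2 :=
    (hμ.setIntegral_comp_fst hC continuousOn_id).trans (by norm_num [integral_id])
  have hsnd : ∫ p in 𝕀², p.2 ∂μ = 1 / 2 :=
    (hμ.setIntegral_comp_snd hC continuousOn_id).trans (by norm_num [integral_id])
  simp_rw [habs]
  rw [integral_sub (hμ.integrableOn_square (by fun_prop)) (hμ.integrableOn_square (by fun_prop)),
    integral_add (hμ.integrableOn_square (by fun_prop)) (hμ.integrableOn_square (by fun_prop)),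
    integral_const_mul, hfst, hsnd, hμ.setIntegral_min hC]
  ring

lemma two_mul_integral_diag_sub_le (hC : IsCopula C) (hμ : IsCopulaMeasure C μ) :
    2 * (∫ t in (0:ℝ)..1, C t t) - 1 / 2 ≤ ∫ p in 𝕀², C p.1 p.2 ∂μ := by
  have hd₁ : IntegrableOn (fun p : ℝ × ℝ => C p.1 p.1) 𝕀² μ := hμ.integrableOn_square <|
    hC.continuousOn_diag.comp continuous_fst.continuousOn fun _ hp => hp.1
  have hd₂ : IntegrableOn (fun p : ℝ × ℝ => C p.2 p.2) 𝕀² μ := hμ.integrableOn_square <|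
    hC.continuousOn_diag.comp continuous_snd.continuousOn fun _ hp => hp.2
  have habs : IntegrableOn (fun p : ℝ × ℝ => |p.1 - p.2|) 𝕀² μ :=
    hμ.integrableOn_square (by fun_prop)
  have hsum : IntegrableOn (fun p : ℝ × ℝ => C p.1 p.1 + C p.2 p.2) 𝕀² μ := hd₁.add hd₂
  have h := setIntegral_mono_on (f := fun p => C p.1 p.1 + C p.2 p.2 - |p.1 - p.2|)
    (hsum.sub habs)
    ((hμ.integrableOn_square hC.continuousOn).const_mul 2)
    (measurableSet_Icc.prod measurableSet_Icc)
    fun p hp => hC.diag_add_diag_sub_abs_le hp.1 hp.2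
  rw [integral_sub hsum habs, integral_add hd₁ hd₂, integral_const_mul,
    hμ.setIntegral_comp_fst hC hC.continuousOn_diag,
    hμ.setIntegral_comp_snd hC hC.continuousOn_diag, hμ.setIntegral_abs_sub hC] at h
  linarith

lemma integral_antidiag_le_setIntegral (hC : IsCopula C) (hμ : IsCopulaMeasure C μ) :
    ∫ t in (0:ℝ)..1, C t (1 - t) ≤ ∫ p in 𝕀², C p.1 p.2 ∂μ :=
  hμ.setIntegral_max_add_sub_one hC ▸ setIntegral_mono_on
    (hμ.integrableOn_square (by fun_prop)) (hμ.integrableOn_square hC.continuousOn)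
    (measurableSet_Icc.prod measurableSet_Icc)
    fun _ hp => max_le (hC.add_sub_one_le hp.1 hp.2) (hC.nonneg hp.1 hp.2)

lemma setIntegral_le_two_mul_integral_antidiag (hC : IsCopula C) (hμ : IsCopulaMeasure C μ) :
    ∫ p in 𝕀², C p.1 p.2 ∂μ ≤ 2 * ∫ t in (0:ℝ)..1, C t (1 - t) := by
  have hanti : IntegrableOn (fun p : ℝ × ℝ => C p.1 (1 - p.1)) 𝕀² μ := hμ.integrableOn_square <|
    hC.continuousOn_antidiag.comp continuous_fst.continuousOn fun _ hp => hp.1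
  have hmax : IntegrableOn (fun p : ℝ × ℝ => max (p.1 + p.2 - 1) 0) 𝕀² μ :=
    hμ.integrableOn_square (by fun_prop)
  have h := setIntegral_mono_on (g := fun p => C p.1 (1 - p.1) + max (p.1 + p.2 - 1) 0)
    (hμ.integrableOn_square hC.continuousOn) (hanti.add hmax)
    (measurableSet_Icc.prod measurableSet_Icc)
    fun p hp => hC.le_antidiag_add_max hp.1 hp.2
  rw [integral_add hanti hmax, hμ.setIntegral_comp_fst hC hC.continuousOn_antidiag,
    hμ.setIntegral_max_add_sub_one hC] at h
  linarith

end IsCopulaMeasure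

/-- Bounds for Kendall's tau given Spearman's footrule and Gini's gamma. -/
theorem kendallTau_bounds (C : ℝ → ℝ → ℝ) (hC : IsCopula C)
    (μ : Measure (ℝ × ℝ)) (hμ : IsCopulaMeasure C μ) :
    max ((4/3) * footrule C - 1/3) (-(2/3) * footrule C + giniGamma C - 1/3)
        ≤ kendallTauInt C μ ∧
      kendallTauInt C μ
        ≤ min ((2/3) * footrule C + 1/3) (-(4/3) * footrule C + 2 * giniGamma C + 1/3) := by
  have h₁ := hμ.setIntegral_le_integral_diag hC
  have h₂ := hμ.two_mul_integral_diag_sub_le hC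
  have h₃ := hμ.integral_antidiag_le_setIntegral hC
  have h₄ := hμ.setIntegral_le_two_mul_integral_antidiag hC
  unfold kendallTauInt footrule giniGamma
  exact ⟨max_le (by linarith) (by linarith), le_min (by linarith) (by linarith)⟩
end
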